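/- arXiv:0902.3961 — 4 statements merged into one kernel-verified Lean document; each statement's English description precedes it below -/
import Mathlib

section
/- Let k be a field, G(x,y) ∈ k[x,y], and suppose the set of quadruples (x,y,z,w) ∈ k^4 with G(x,y) = G(z,w) and (x,y) ≠ (z,w) is finite. Suppose φ : k → k is an injective map given by a polynomial such that no coordinate of any of these finitely many exceptional quadruples lies in the image of φ. Then f(x,y) := G(φ(x), φ(y)) defines an injection k × k → k. -/
/-- Let `G ∈ k[x,y]` be such that the set `E` of quadruples `(x,y,z,w)` with
`G(x,y) = G(z,w)` and `(x,y) ≠ (z,w)` is finite. If `φ : k → k` is an injective polynomial map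
whose image avoids every coordinate of every quadruple in `E`, then
`f(x,y) := G(φ x, φ y)` defines an injection `k × k → k`. -/
theorem stmt_4 (k : Type*) [Field k] (G : MvPolynomial (Fin 2) k)
    (E : Set ((k × k) × (k × k)))
    (hE : E = {q | MvPolynomial.eval ![q.1.1, q.1.2] G = MvPolynomial.eval ![q.2.1, q.2.2] G
        ∧ q.1 ≠ q.2})
    (hfin : E.Finite)
    (φ : k → k) (hφinj : Function.Injective φ)
    (hpoly : ∃ P : Polynomial k, ∀ t : k, φ t = P.eval t)
    (havoid : ∀ q ∈ E, ∀ c ∈ ({q.1.1, q.1.2, q.2.1, q.2.2} : Set k), c ∉ Set.range φ) :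
    Function.Injective (fun xy : k × k => MvPolynomial.eval ![φ xy.1, φ xy.2] G) := by
  intro a b hab
  simp only at hab
  by_cases h : (φ a.1, φ a.2) = (φ b.1, φ b.2)
  · obtain ⟨h1, h2⟩ := Prod.mk.injEq .. ▸ h
    exact Prod.ext (hφinj h1) (hφinj h2)
  · exfalso
    have hq : ((φ a.1, φ a.2), (φ b.1, φ b.2)) ∈ E := by
      rw [hE]; exact ⟨hab, h⟩
    exact havoid _ hq (φ a.1) (by simp) ⟨a.1, rfl⟩
end

section
/- Let F(x,y) be a nonzero homogeneous polynomial of degree d over a field k, and let Z be a geometrically irreducible curve in P^3 contained in the surface F(x,y) = F(z,w) on which the rational functions x/y and z/w are defined, nonconstant, and equal. Then Z is a 'trivial line', i.e., Z is cut out by x − ζz = y − ζw = 0 for some ζ ∈ k̄ with ζ^d = 1. -/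
open MvPolynomial in
lemma aux_homog_smul {k K : Type*} [Field k] [Field K] [Algebra k K]
    {F : MvPolynomial (Fin 2) k} {d : ℕ} (hF : F.IsHomogeneous d)
    (c : K) (g : Fin 2 → K) :
    MvPolynomial.aeval (fun i => c * g i) F = c ^ d * MvPolynomial.aeval g F := by
  rw [aeval_def, aeval_def, eval₂_eq', eval₂_eq', Finset.mul_sum]
  refine Finset.sum_congr rfl fun m hm => ?_
  have hdeg : m 0 + m 1 = d := by
    have := hF (MvPolynomial.mem_support_iff.mp hm)
    simpa [Finsupp.weight_apply, Finsupp.sum_fintype, Fin.sum_univ_two] using this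
  rw [Fin.prod_univ_two, Fin.prod_univ_two, mul_pow, mul_pow]
  rw [← hdeg, pow_add]
  ring

open MvPolynomial in
lemma aux_dehom_ne_zero {k : Type*} [Field k]
    {F : MvPolynomial (Fin 2) k} {d : ℕ} (hF : F.IsHomogeneous d) (hF0 : F ≠ 0) :
    MvPolynomial.aeval ![Polynomial.X, 1] F ≠ (0 : Polynomial k) := by
  obtain ⟨m, hm⟩ := (MvPolynomial.support_nonempty.mpr hF0)
  intro h
  have hco : (MvPolynomial.aeval ![Polynomial.X, 1] F).coeff (m 0) = F.coeff m := by
    rw [aeval_def, eval₂_eq']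
    have : ∀ m' : Fin 2 →₀ ℕ,
        (algebraMap k (Polynomial k)) (coeff m' F) * ∏ i, (![Polynomial.X, 1] i) ^ m' i
        = Polynomial.C (coeff m' F) * Polynomial.X ^ (m' 0) := by
      intro m'
      rw [Fin.prod_univ_two]
      simp [Polynomial.algebraMap_eq]
    simp_rw [this]
    rw [Polynomial.finset_sum_coeff]
    rw [Finset.sum_eq_single m]
    · simp
    · intro m' hm' hne
      rw [Polynomial.coeff_C_mul, Polynomial.coeff_X_pow]
      rw [if_neg, mul_zero]
      intro hEq
      apply hne
      have h1 : m' 0 + m' 1 = d := by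
        have := hF (MvPolynomial.mem_support_iff.mp hm')
        simpa [Finsupp.weight_apply, Finsupp.sum_fintype, Fin.sum_univ_two] using this
      have h2 : m 0 + m 1 = d := by
        have := hF (MvPolynomial.mem_support_iff.mp hm)
        simpa [Finsupp.weight_apply, Finsupp.sum_fintype, Fin.sum_univ_two] using this
      have e0 : m' 0 = m 0 := hEq.symm
      have e1 : m' 1 = m 1 := by omega
      ext i
      fin_cases i
      · exact e0
      · exact e1
    · intro hnm; exact absurd hm hnm
  rw [h] at hco
  simp only [Polynomial.coeff_zero] at hco
  exact MvPolynomial.mem_support_iff.mp hm hco.symm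


/-- Let `F(x,y)` be a nonzero homogeneous polynomial of degree `d` over `k`, and
let `Z` be a geometrically irreducible curve in the surface `F(x,y) = F(z,w)` on which `x/y`
and `z/w` are defined, nonconstant, and equal. Then `Z` is a trivial line, i.e. its coordinate
functions satisfy `x = ζ z`, `y = ζ w` for some `d`-th root of unity `ζ`.

We model the function field of `Z` as a field extension `K/k`, the coordinate functions as
`x, y, z, w ∈ K`, equality `x/y = z/w` as `x*w = y*z` with `y, w ≠ 0`, and nonconstancy as
transcendence of `x/y` over `k` (a nonconstant function on a geometrically irreducible curve
is transcendental over the base field). -/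
theorem stmt_6 (k K : Type*) [Field k] [Field K] [Algebra k K]
    (F : MvPolynomial (Fin 2) k) (d : ℕ) (hF : F.IsHomogeneous d) (hF0 : F ≠ 0)
    (x y z w : K) (hy : y ≠ 0) (hw : w ≠ 0)
    (heq : MvPolynomial.aeval ![x, y] F = MvPolynomial.aeval ![z, w] F)
    (hxw : x * w = y * z)
    (htrans : Transcendental k (x / y)) :
    ∃ ζ : K, ζ ^ d = 1 ∧ x = ζ * z ∧ y = ζ * w := by
  have hdiv : x / y = z / w := by
    rw [div_eq_div_iff hy hw]; linear_combination hxw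
  refine ⟨y / w, ?_, ?_, by field_simp⟩
  · -- first show F(z,w) ≠ 0
    have hFzw : MvPolynomial.aeval ![z, w] F ≠ 0 := by
      have h1 : (fun i => w * (![z / w, 1] i)) = ![z, w] := by
        funext i; fin_cases i <;> simp [hw, mul_div_cancel₀, mul_comm]
      have h2 : MvPolynomial.aeval ![z, w] F
          = w ^ d * MvPolynomial.aeval ![z / w, 1] F := by
        rw [← h1, aux_homog_smul hF]
      have h3 : Polynomial.aeval (z / w) (MvPolynomial.aeval ![(Polynomial.X : Polynomial k), 1] F)
          = MvPolynomial.aeval ![z / w, 1] F := by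
        rw [MvPolynomial.comp_aeval_apply]
        have hfn : (fun i => Polynomial.aeval (z / w) (![(Polynomial.X : Polynomial k), 1] i))
            = ![z / w, 1] := by funext i; fin_cases i <;> simp
        rw [hfn]
      have htrans' : Transcendental k (z / w) := hdiv ▸ htrans
      have h4 : Polynomial.aeval (z / w) (MvPolynomial.aeval ![(Polynomial.X : Polynomial k), 1] F) ≠ 0 := by
        intro h0
        exact aux_dehom_ne_zero hF hF0 (transcendental_iff.mp htrans' _ h0)
      rw [h2, ← h3]
      exact mul_ne_zero (pow_ne_zero _ hw) h4
    have hx : x = (y / w) * z := by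
      rw [div_mul_eq_mul_div, eq_comm, div_eq_iff hw]; linear_combination -hxw
    have hy' : y = (y / w) * w := by field_simp
    have h5 : (fun i => (y / w) * (![z, w] i)) = ![x, y] := by
      funext i; fin_cases i <;> simp [← hx, ← hy']
    have h6 : MvPolynomial.aeval ![x, y] F
        = (y / w) ^ d * MvPolynomial.aeval ![z, w] F := by
      rw [← h5, aux_homog_smul hF]
    rw [h6] at heq
    have h7 : (y / w) ^ d * MvPolynomial.aeval ![z, w] F
        = 1 * MvPolynomial.aeval ![z, w] F := by rw [one_mul]; exact heq
    exact mul_right_cancel₀ hFzw h7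
  · rw [div_mul_eq_mul_div, eq_comm, div_eq_iff hw]; linear_combination -hxw
end

section
/- Let L be a local field of characteristic 0 (i.e., R, C, or a finite extension of Q_p) and let f(x,y) ∈ L[x,y] be a nonconstant polynomial. Then the induced map L × L → L is not injective. -/
/-!
A nonconstant polynomial over a field of characteristic zero has a nonzero formal partial
derivative, hence a point `v` where its differential is a nonzero functional on `L²`. By the
implicit function theorem, near `v` the level set through `v` is parametrised by a neighbourhood
of `0` in the kernel of that functional, a line; so the level set contains a second point.
-/

open Topology Module

namespace MvPolynomial

variable {σ R : Type*}

theorem exists_pderiv_ne_zero [CommSemiring R] [NoZeroDivisors R] [CharZero R]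
    {p : MvPolynomial σ R} (hp : p.totalDegree ≠ 0) : ∃ i, pderiv i p ≠ 0 := by
  obtain ⟨s, hs, i, hsi⟩ : ∃ s ∈ p.support, ∃ i, s i ≠ 0 := by
    simpa [totalDegree_eq_zero_iff] using hp
  refine ⟨i, fun h => ?_⟩
  have hcoeff := coeff_pderiv (i := i) p (s - Finsupp.single i 1)
  rw [h, coeff_zero, tsub_add_cancel_of_le
    (Finsupp.single_le_iff.mpr (Nat.one_le_iff_ne_zero.mpr hsi))] at hcoeff
  exact mul_ne_zero (mem_support_iff.mp hs) (Nat.cast_add_one_ne_zero _) hcoeff.symm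

theorem hasDerivAt_eval_update [NontriviallyNormedField R] [DecidableEq σ]
    (p : MvPolynomial σ R) (v : σ → R) (j : σ) (y : R) :
    HasDerivAt (fun t => eval (Function.update v j t) p)
      (eval (Function.update v j y) (pderiv j p)) y := by
  induction p using MvPolynomial.induction_on with
  | C a => simpa using hasDerivAt_const y a
  | add p q hp hq => simp only [map_add]; exact hp.add hq
  | mul_X p i hp =>
    have hi := hasDerivAt_pi.mp (hasDerivAt_update v j y) i
    simp only [map_mul, eval_X]
    refine (hp.mul hi).congr_deriv ?_
    rcases eq_or_ne i j with rfl | hij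
    · simp; ring
    · simp [pderiv_X_of_ne hij, hij]; ring

end MvPolynomial

section ImplicitFunction

variable {𝕜 : Type*} [NontriviallyNormedField 𝕜] [CompleteSpace 𝕜]
  {E : Type*} [NormedAddCommGroup E] [NormedSpace 𝕜 E] {a : E}

theorem HasStrictFDerivAt.exists_ne_apply_eq [CompleteSpace E]
    {F : Type*} [NormedAddCommGroup F] [NormedSpace 𝕜 F] [FiniteDimensional 𝕜 F]
    {f : E → F} {f' : E →L[𝕜] F} (hf : HasStrictFDerivAt f f' a)
    (hf' : f'.range = ⊤) (hker : f'.ker ≠ ⊥) : ∃ x ≠ a, f x = f a := by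
  have : Nontrivial f'.ker := Submodule.nontrivial_iff_ne_bot.mpr hker
  have : (𝓝[≠] (0 : f'.ker)).NeBot := Module.punctured_nhds_neBot 𝕜 f'.ker 0
  set Φ := hf.implicitToOpenPartialHomeomorph f f' hf'
  have htarget : ∀ᶠ z : f'.ker in 𝓝[≠] 0, (f a, z) ∈ Φ.target :=
    nhdsWithin_le_nhds <| (Φ.open_target.preimage (by fun_prop)).mem_nhds
      (hf.mem_implicitToOpenPartialHomeomorph_target hf')
  obtain ⟨z, hzΦ, hz0⟩ := (htarget.and self_mem_nhdsWithin).exists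
  have hΦz : Φ (Φ.symm (f a, z)) = (f a, z) := Φ.right_inv hzΦ
  refine ⟨Φ.symm (f a, z), fun h => hz0 ?_, congrArg Prod.fst hΦz⟩
  rw [h, hf.implicitToOpenPartialHomeomorph_self hf'] at hΦz
  exact (congrArg Prod.snd hΦz).symm

theorem HasStrictFDerivAt.exists_ne_apply_eq_of_ne_zero [FiniteDimensional 𝕜 E]
    (hE : 1 < finrank 𝕜 E) {g : E → 𝕜} {g' : E →L[𝕜] 𝕜} (hg : HasStrictFDerivAt g g' a)
    (hg' : g' ≠ 0) : ∃ x ≠ a, g x = g a :=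
  have := FiniteDimensional.complete 𝕜 E
  hg.exists_ne_apply_eq
    (Module.Dual.range_eq_top_of_ne_zero (ContinuousLinearMap.coe_injective.ne hg'))
    (LinearMap.ker_ne_bot_of_finrank_lt (by rwa [finrank_self]))

end ImplicitFunction

namespace MvPolynomial

variable {σ 𝕜 : Type*} [Fintype σ] [NontriviallyNormedField 𝕜]

theorem analyticAt_eval (p : MvPolynomial σ 𝕜) (v : σ → 𝕜) :
    AnalyticAt 𝕜 (fun x => eval x p) v :=
  AnalyticAt.aeval_mvPolynomial (f := id) (analyticAt_pi_iff.mp analyticAt_id) p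

theorem exists_fderiv_eval_ne_zero [CharZero 𝕜] {p : MvPolynomial σ 𝕜}
    (hp : p.totalDegree ≠ 0) : ∃ v, fderiv 𝕜 (fun x => eval x p) v ≠ 0 := by
  classical
  obtain ⟨j, hj⟩ := exists_pderiv_ne_zero hp
  obtain ⟨v, hv⟩ : ∃ v, eval v (pderiv j p) ≠ 0 := by
    contrapose! hj
    exact MvPolynomial.funext fun v => by simp [hj]
  have hline := (analyticAt_eval p v).differentiableAt.hasFDerivAt.comp_hasDerivAt_of_eq (v j)
    (hasDerivAt_update v j (v j)) (Function.update_eq_self j v).symm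
  refine ⟨v, fun h => hv ?_⟩
  simpa [h] using (hline.unique (hasDerivAt_eval_update p v j (v j))).symm

end MvPolynomial

theorem stmt_10_general (L : Type*) [NontriviallyNormedField L] [CompleteSpace L]
    [CharZero L]
    (f : MvPolynomial (Fin 2) L) (hf : f.totalDegree ≠ 0) :
    ¬ Function.Injective (fun xy : L × L => MvPolynomial.eval ![xy.1, xy.2] f) := by
  obtain ⟨v, hv⟩ := MvPolynomial.exists_fderiv_eval_ne_zero hf
  obtain ⟨w, hwv, hw⟩ := (MvPolynomial.analyticAt_eval f v).hasStrictFDerivAt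
    |>.exists_ne_apply_eq_of_ne_zero (by simp) hv
  change ¬ Function.Injective ((fun x => MvPolynomial.eval x f) ∘ (finTwoArrowEquiv L).symm)
  rw [EquivLike.injective_comp]
  exact fun hinj => hwv (hinj hw)

/-- Let `L` be a local field of characteristic 0 (a complete, locally compact
nontrivially normed field of characteristic zero, i.e. `ℝ`, `ℂ`, or a finite extension of
`ℚ_p`) and `f ∈ L[x,y]` a nonconstant polynomial. Then the induced map `L × L → L` is not
injective. -/
theorem stmt_10 (L : Type*) [NontriviallyNormedField L] [CompleteSpace L]
    [LocallyCompactSpace L] [CharZero L]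
    (f : MvPolynomial (Fin 2) L) (hf : f.totalDegree ≠ 0) :
    ¬ Function.Injective (fun xy : L × L => MvPolynomial.eval ![xy.1, xy.2] f) :=
  stmt_10_general L f hf
end

section
/- Suppose G ∈ Q[x,y] is such that every solution (x,y,z,w) ∈ Q^4 of G(x,y) = G(z,w) satisfies (x,y) = (z,w) or lies in a fixed finite set E. Let p be an odd prime and b ∈ Q such that no element of the form a·t^p + b (for the chosen a ≠ 0, t ∈ Q) equals any coordinate appearing in E. Then f(x,y) = G(a x^p + b, a y^p + b) is injective as a map Q × Q → Q. -/
theorem injective_mul_pow_add {R : Type*} [CommRing R] [LinearOrder R] [IsStrictOrderedRing R]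
    {p : ℕ} (hodd : Odd p) {a : R} (ha : a ≠ 0) (b : R) :
    Function.Injective fun t : R => a * t ^ p + b :=
  (add_left_injective b).comp ((mul_right_injective₀ ha).comp hodd.strictMono_pow.injective)

/-- An off-diagonal collision would be a point of `E` whose first coordinate lies in the range
of `φ`. -/
theorem injective_comp_prodMap_of_offDiag_collisions_mem {α β γ : Type*} (g : α → α → β)
    (E : Set (α × α × α × α))
    (hE : ∀ x y z w : α, g x y = g z w → (x, y) = (z, w) ∨ (x, y, z, w) ∈ E)
    {φ : γ → α} (hφ : Function.Injective φ) (havoid : ∀ q ∈ E, ∀ t, φ t ≠ q.1) :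
    Function.Injective fun xy : γ × γ => g (φ xy.1) (φ xy.2) := by
  rintro ⟨x, y⟩ ⟨z, w⟩ h
  rcases hE _ _ _ _ h with heq | hmem
  · obtain ⟨hxz, hyw⟩ := Prod.mk.inj heq
    exact Prod.ext (hφ hxz) (hφ hyw)
  · exact absurd rfl (havoid _ hmem x)

theorem stmt_15_general (G : MvPolynomial (Fin 2) ℚ) (E : Set (ℚ × ℚ × ℚ × ℚ))
    (hE : ∀ x y z w : ℚ, MvPolynomial.eval ![x, y] G = MvPolynomial.eval ![z, w] G →
      (x, y) = (z, w) ∨ (x, y, z, w) ∈ E)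
    (p : ℕ) (hodd : Odd p)
    (a b : ℚ) (ha : a ≠ 0)
    (havoid : ∀ q ∈ E, ∀ t : ℚ, a * t ^ p + b ≠ q.1 ∧ a * t ^ p + b ≠ q.2.1 ∧
      a * t ^ p + b ≠ q.2.2.1 ∧ a * t ^ p + b ≠ q.2.2.2) :
    Function.Injective (fun xy : ℚ × ℚ =>
      MvPolynomial.eval ![a * xy.1 ^ p + b, a * xy.2 ^ p + b] G) :=
  injective_comp_prodMap_of_offDiag_collisions_mem (fun u v => MvPolynomial.eval ![u, v] G) E hE
    (φ := fun t => a * t ^ p + b) (injective_mul_pow_add hodd ha b) fun q hq t => (havoid q hq t).1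

/-- Suppose `G ∈ ℚ[x,y]` is such that every solution of `G(x,y) = G(z,w)` either
satisfies `(x,y) = (z,w)` or lies in a fixed finite set `E`. Let `p` be an odd prime and
`a ≠ 0`, `b ∈ ℚ` be such that no value `a·t^p + b` equals a coordinate of an element of `E`.
Then `f(x,y) = G(a x^p + b, a y^p + b)` is injective as a map `ℚ × ℚ → ℚ`. -/
theorem stmt_15 (G : MvPolynomial (Fin 2) ℚ) (E : Set (ℚ × ℚ × ℚ × ℚ)) (hEfin : E.Finite)
    (hE : ∀ x y z w : ℚ, MvPolynomial.eval ![x, y] G = MvPolynomial.eval ![z, w] G →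
      (x, y) = (z, w) ∨ (x, y, z, w) ∈ E)
    (p : ℕ) (hp : p.Prime) (hodd : Odd p)
    (a b : ℚ) (ha : a ≠ 0)
    (havoid : ∀ q ∈ E, ∀ t : ℚ, a * t ^ p + b ≠ q.1 ∧ a * t ^ p + b ≠ q.2.1 ∧
      a * t ^ p + b ≠ q.2.2.1 ∧ a * t ^ p + b ≠ q.2.2.2) :
    Function.Injective (fun xy : ℚ × ℚ =>
      MvPolynomial.eval ![a * xy.1 ^ p + b, a * xy.2 ^ p + b] G) :=
  stmt_15_general G E hE p hodd a b ha havoid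
end
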